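/- arXiv:2009.03295 — 2 statements merged into one kernel-verified Lean document; each statement's English description precedes it below -/
import Mathlib

section
/- Let D be a digraph, f a vertex-direction of D, and (A₁,B₁), (A₂,B₂) finite order separations of D. If both point towards f, then (A₁ ∪ A₂, B₁ ∩ B₂) points towards f; if both point away from f, then (A₁ ∩ A₂, B₁ ∪ B₂) points away from f. -/
variable {V : Type*}

/-- Reachability from `a` to `b` by a directed walk staying inside the vertex set `S`. -/
def ReachIn (D : V → V → Prop) (S : Set V) (a b : V) : Prop :=
  a ∈ S ∧ b ∈ S ∧ Relation.ReflTransGen (fun x y => y ∈ S ∧ D x y) a b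

/-- `C` is a strong component of the subdigraph of `D` induced on `S`. -/
def IsSCCIn (D : V → V → Prop) (S : Set V) (C : Set V) : Prop :=
  ∃ a ∈ S, C = {b | ReachIn D S a b ∧ ReachIn D S b a}

/-- A directed ray in `D`. -/
def IsRay (D : V → V → Prop) (R : ℕ → V) : Prop :=
  Function.Injective R ∧ ∀ n, D (R n) (R (n + 1))

/-- A reverse directed ray in `D`. -/
def IsRevRay (D : V → V → Prop) (R : ℕ → V) : Prop :=
  Function.Injective R ∧ ∀ n, D (R (n + 1)) (R n)

/-- The ray `R` has a tail inside the vertex set `C`. -/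
def HasTailIn (R : ℕ → V) (C : Set V) : Prop :=
  ∃ n, ∀ m, n ≤ m → R m ∈ C

/-- A solid ray: for every finite `X` it has a tail in some strong component of `D − X`. -/
def Solid (D : V → V → Prop) (R : ℕ → V) : Prop :=
  IsRay D R ∧ ∀ X : Finset V, ∃ C, IsSCCIn D ((↑X : Set V)ᶜ) C ∧ HasTailIn R C

/-- Two solid rays are end-equivalent: for every finite `X` they have tails in the same
strong component of `D − X`. -/
def EndEquiv (D : V → V → Prop) (R R' : ℕ → V) : Prop :=
  ∀ X : Finset V, ∃ C, IsSCCIn D ((↑X : Set V)ᶜ) C ∧ HasTailIn R C ∧ HasTailIn R' C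

/-- `Ω` is an end of `D`: the class of solid rays equivalent to some solid ray. -/
def IsEnd (D : V → V → Prop) (Ω : Set (ℕ → V)) : Prop :=
  ∃ R, Solid D R ∧ Ω = {R' | Solid D R' ∧ EndEquiv D R R'}

/-- A (nonempty) directed path, recorded as its list of vertices. -/
def IsPathList (D : V → V → Prop) (l : List V) : Prop :=
  l ≠ [] ∧ l.Nodup ∧ l.Chain' D

/-- Infinitely many pairwise disjoint `A`–`B` paths in `D` (each meeting `A` precisely in its
first vertex and `B` precisely in its last vertex). -/
def DisjointPathsFrom (D : V → V → Prop) (A B : Set V) : Prop :=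
  ∃ P : ℕ → List V,
    (∀ k, IsPathList D (P k)) ∧
    (∀ j k, j ≠ k → ∀ x ∈ P j, x ∉ P k) ∧
    (∀ k, ∃ a, (P k).head? = some a ∧ a ∈ A) ∧
    (∀ k, ∃ b, (P k).getLast? = some b ∧ b ∈ B) ∧
    (∀ k, ∀ x ∈ (P k).tail, x ∉ A) ∧
    (∀ k, ∀ x ∈ (P k).dropLast, x ∉ B)

/-- A necklace in `D`: an inflated symmetric ray with finite branch sets (beads), given by its
beads together with the connecting (subdividing) paths in both directions. -/
structure Necklace (D : V → V → Prop) where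
  bead : ℕ → Set V
  fwd : ℕ → List V
  bwd : ℕ → List V
  bead_fin : ∀ n, (bead n).Finite
  bead_nonempty : ∀ n, (bead n).Nonempty
  bead_disj : ∀ m n, m ≠ n → Disjoint (bead m) (bead n)
  bead_strong : ∀ n, ∀ a ∈ bead n, ∀ b ∈ bead n, ReachIn D (bead n) a b
  fwd_path : ∀ n, IsPathList D (fwd n)
  bwd_path : ∀ n, IsPathList D (bwd n)
  fwd_head : ∀ n a, (fwd n).head? = some a → a ∈ bead n
  fwd_last : ∀ n b, (fwd n).getLast? = some b → b ∈ bead (n + 1)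
  bwd_head : ∀ n a, (bwd n).head? = some a → a ∈ bead (n + 1)
  bwd_last : ∀ n b, (bwd n).getLast? = some b → b ∈ bead n
  fwd_inner : ∀ n, ∀ x ∈ (fwd n).tail.dropLast, ∀ m, x ∉ bead m
  bwd_inner : ∀ n, ∀ x ∈ (bwd n).tail.dropLast, ∀ m, x ∉ bead m
  fwd_fwd_disj : ∀ m n, m ≠ n → ∀ x ∈ (fwd m).tail.dropLast, x ∉ (fwd n).tail.dropLast
  bwd_bwd_disj : ∀ m n, m ≠ n → ∀ x ∈ (bwd m).tail.dropLast, x ∉ (bwd n).tail.dropLast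
  fwd_bwd_disj : ∀ m n, ∀ x ∈ (fwd m).tail.dropLast, x ∉ (bwd n).tail.dropLast

/-- The vertex set of a necklace. -/
def Necklace.verts {D : V → V → Prop} (N : Necklace D) : Set V :=
  (⋃ n, N.bead n) ∪ {x | ∃ n, x ∈ N.fwd n ∨ x ∈ N.bwd n}

/-- A necklace is attached to `𝒰` if infinitely many of its beads meet every set in `𝒰`. -/
def Necklace.AttachedTo {D : V → V → Prop} (N : Necklace D) (𝒰 : Finset (Set V)) : Prop :=
  {n | ∀ U ∈ 𝒰, (N.bead n ∩ U).Nonempty}.Infinite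

/-- A necklace represents the end of the solid ray `R`: for every finite `X`, all but finitely
many beads lie in the strong component of `D − X` in which `R` has a tail. -/
def NecklaceRepresents {D : V → V → Prop} (N : Necklace D) (R : ℕ → V) : Prop :=
  ∀ X : Finset V, ∃ C, IsSCCIn D ((↑X : Set V)ᶜ) C ∧ HasTailIn R C ∧
    ∃ n₀, ∀ n, n₀ ≤ n → N.bead n ⊆ C

/-- `URankLE D 𝒰 S α`: the subdigraph of `D` induced on `S` has `𝒰`-rank at most `α`. -/
inductive URankLE (D : V → V → Prop) (𝒰 : Finset (Set V)) : Set V → Ordinal → Prop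
  | base (S : Set V) (α : Ordinal) (U : Set V) (hU : U ∈ 𝒰) (h : (U ∩ S).Finite) :
      URankLE D 𝒰 S α
  | step (S : Set V) (α : Ordinal) (X : Finset V) (r : Set V → Ordinal)
      (hr : ∀ C, IsSCCIn D (S \ ↑X) C → r C < α)
      (h : ∀ C, IsSCCIn D (S \ ↑X) C → URankLE D 𝒰 C (r C)) :
      URankLE D 𝒰 S α

/-- `D` (induced on `S`) has `𝒰`-rank exactly `α`. -/
def HasURank (D : V → V → Prop) (𝒰 : Finset (Set V)) (S : Set V) (α : Ordinal) : Prop :=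
  URankLE D 𝒰 S α ∧ ∀ β < α, ¬ URankLE D 𝒰 S β

/-- A vertex-direction of `D`. -/
def IsVertexDirection (D : V → V → Prop) (f : Finset V → Set V) : Prop :=
  (∀ X : Finset V, IsSCCIn D ((↑X : Set V)ᶜ) (f X)) ∧
  ∀ X Y : Finset V, X ⊆ Y → f Y ⊆ f X

/-- A separation `(A,B)` of `D`: `A ∪ B = V(D)` and no edge from `B∖A` to `A∖B`. -/
def IsSep (D : V → V → Prop) (A B : Set V) : Prop :=
  A ∪ B = Set.univ ∧ ∀ a ∈ B \ A, ∀ b ∈ A \ B, ¬ D a b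

/-- A finite order separation `(A,B)` points towards the vertex-direction `f`. -/
def PointsTowards (D : V → V → Prop) (f : Finset V → Set V) (A B : Set V)
    (h : (A ∩ B).Finite) : Prop :=
  f h.toFinset ⊆ B \ A

/-- A finite order separation `(A,B)` points away from the vertex-direction `f`. -/
def PointsAway (D : V → V → Prop) (f : Finset V → Set V) (A B : Set V)
    (h : (A ∩ B).Finite) : Prop :=
  f h.toFinset ⊆ A \ B

/-- The vertex `v` dominates the vertex-direction `f`. -/
def DomDir (D : V → V → Prop) (v : V) (f : Finset V → Set V) : Prop :=
  ∀ A B, IsSep D A B → ∀ h : (A ∩ B).Finite, PointsAway D f A B h → v ∈ A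

/-- An infinite `v`–`B` fan: infinitely many `v`–`B` paths meeting pairwise precisely in `v`. -/
def Fan (D : V → V → Prop) (v : V) (B : Set V) : Prop :=
  ∃ P : ℕ → List V,
    (∀ k, IsPathList D (P k)) ∧
    (∀ k, (P k).head? = some v) ∧
    (∀ k, 2 ≤ (P k).length) ∧
    (∀ k, ∃ b, (P k).getLast? = some b ∧ b ∈ B) ∧
    (∀ k, ∀ x ∈ (P k).dropLast, x ∉ B) ∧
    (∀ j k, j ≠ k → ∀ x ∈ (P j).tail, x ∉ (P k).tail)

/-- Limit edge between the ends of the solid rays `R` and `R'`. -/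
def LimitEdgeEE (D : V → V → Prop) (R R' : ℕ → V) : Prop :=
  ∀ (X : Finset V) C C', IsSCCIn D ((↑X : Set V)ᶜ) C → HasTailIn R C →
    IsSCCIn D ((↑X : Set V)ᶜ) C' → HasTailIn R' C' → C ≠ C' →
    ∃ a ∈ C, ∃ b ∈ C', D a b

/-- Limit edge from the vertex `v` to the end of the solid ray `R`. -/
def LimitEdgeVE (D : V → V → Prop) (v : V) (R : ℕ → V) : Prop :=
  ∀ (X : Finset V) C, IsSCCIn D ((↑X : Set V)ᶜ) C → HasTailIn R C → v ∉ C →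
    ∃ b ∈ C, D v b

/-- Limit edge from the end of the solid ray `R` to the vertex `v`. -/
def LimitEdgeEV (D : V → V → Prop) (R : ℕ → V) (v : V) : Prop :=
  ∀ (X : Finset V) C, IsSCCIn D ((↑X : Set V)ᶜ) C → HasTailIn R C → v ∉ C →
    ∃ a ∈ C, D a v

/-- A subdivided infinite out-star in `D` with centre `c`, given by its paths. -/
def IsStar (D : V → V → Prop) (c : V) (P : ℕ → List V) : Prop :=
  (∀ k, IsPathList D (P k)) ∧ (∀ k, (P k).head? = some c) ∧
  (∀ k, 2 ≤ (P k).length) ∧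
  (∀ j k, j ≠ k → ∀ x ∈ (P j).tail, x ∉ (P k).tail)

/-- A directed comb in `D` with spine `R`, given by its (pairwise disjoint) paths each meeting
`R` precisely in its first vertex. -/
def IsComb (D : V → V → Prop) (R : ℕ → V) (P : ℕ → List V) : Prop :=
  IsRay D R ∧ (∀ k, IsPathList D (P k)) ∧
  (∀ k, ∃ n, (P k).head? = some (R n)) ∧
  (∀ k, ∀ x ∈ (P k).tail, ∀ n, x ≠ R n) ∧
  (∀ j k, j ≠ k → ∀ x ∈ P j, x ∉ P k)

/-- A star in `D` whose `k`-th leaf is `a k`. -/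
def StarAttachedWith (D : V → V → Prop) (a : ℕ → V) : Prop :=
  ∃ c P, IsStar D c P ∧ ∀ k, (P k).getLast? = some (a k)

/-- A comb in `D` whose `k`-th tooth is `a k`. -/
def CombAttachedWith (D : V → V → Prop) (a : ℕ → V) : Prop :=
  ∃ R P, IsComb D R P ∧ ∀ k, (P k).getLast? = some (a k)

/-- `a` and `b` are consecutive entries of the list `l`. -/
def AdjInList (l : List V) (a b : V) : Prop :=
  ∃ l₁ l₂, l = l₁ ++ a :: b :: l₂

/-- The edge relation of (a subdigraph of `D` forming) the necklace `N`: all `D`-edges inside a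
bead together with the edges of the connecting paths. -/
def Necklace.edges {D : V → V → Prop} (N : Necklace D) (a b : V) : Prop :=
  D a b ∧ ((∃ n, a ∈ N.bead n ∧ b ∈ N.bead n) ∨
    (∃ n, AdjInList (N.fwd n) a b ∨ AdjInList (N.bwd n) a b))

/-- A generalized ray: a directed ray (`true`) or a reverse directed ray (`false`). -/
def IsGenRay (D : V → V → Prop) : Bool × (ℕ → V) → Prop
  | (true, R) => IsRay D R
  | (false, R) => IsRevRay D R

/-- Pre-end equivalence of generalized rays: infinitely many disjoint paths in both
directions. -/
def PreEquiv (D : V → V → Prop) (Q Q' : Bool × (ℕ → V)) : Prop :=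
  DisjointPathsFrom D (Set.range Q.2) (Set.range Q'.2) ∧
  DisjointPathsFrom D (Set.range Q'.2) (Set.range Q.2)

/-- The pre-end `γ` includes the end represented by the solid ray `R`. -/
def IncludesEnd (D : V → V → Prop) (γ : Set (Bool × (ℕ → V))) (R : ℕ → V) : Prop :=
  Solid D R ∧ ∀ R', Solid D R' → EndEquiv D R R' → (true, R') ∈ γ

/-- The set of edges of `D` from `A` to `B`. -/
def EdgesBetween (D : V → V → Prop) (A B : Set V) : Set (V × V) :=
  {e | D e.1 e.2 ∧ e.1 ∈ A ∧ e.2 ∈ B}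

/-- A bundle of `D − X`. -/
def IsBundle (D : V → V → Prop) (X : Finset V) (E : Set (V × V)) : Prop :=
  E.Nonempty ∧
  ((∃ C C', IsSCCIn D ((↑X : Set V)ᶜ) C ∧ IsSCCIn D ((↑X : Set V)ᶜ) C' ∧ C ≠ C' ∧
      E = EdgesBetween D C C') ∨
   (∃ v ∈ X, ∃ C, IsSCCIn D ((↑X : Set V)ᶜ) C ∧
      (E = EdgesBetween D {v} C ∨ E = EdgesBetween D C {v})))

/-- Compatibility `f(X) ⊇ f(Y)` between values of a direction (a strong component is regarded
as containing a bundle if it contains all its edges). -/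
def DirCompat : Set V ⊕ Set (V × V) → Set V ⊕ Set (V × V) → Prop
  | Sum.inl C, Sum.inl C' => C' ⊆ C
  | Sum.inl C, Sum.inr E' => ∀ e ∈ E', e.1 ∈ C ∧ e.2 ∈ C
  | Sum.inr _, Sum.inl _ => False
  | Sum.inr E, Sum.inr E' => E' ⊆ E

/-- A direction of `D`: maps each finite `X` to a strong component or a bundle of `D − X`,
compatibly. -/
def IsDirection (D : V → V → Prop) (f : Finset V → Set V ⊕ Set (V × V)) : Prop :=
  (∀ X : Finset V, (∃ C, IsSCCIn D ((↑X : Set V)ᶜ) C ∧ f X = Sum.inl C) ∨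
    (∃ E, IsBundle D X E ∧ f X = Sum.inr E)) ∧
  ∀ X Y : Finset V, X ⊆ Y → DirCompat (f X) (f Y)

/-- An edge-direction: a direction whose value is a bundle for some finite `X`. -/
def IsEdgeDirection (D : V → V → Prop) (f : Finset V → Set V ⊕ Set (V × V)) : Prop :=
  IsDirection D f ∧ ∃ (X : Finset V) (E : Set (V × V)), f X = Sum.inr E

/-- The three kinds of (potential) limit edges: end–end, vertex–end, end–vertex.
Ends are given as sets of (solid) rays. -/
inductive LimitEdgeObj (V : Type*) where
  | ee (Ω₁ Ω₂ : Set (ℕ → V))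
  | ve (v : V) (Ω : Set (ℕ → V))
  | ev (Ω : Set (ℕ → V)) (v : V)

/-- `l` is a limit edge of `D`. -/
def IsLimitEdge (D : V → V → Prop) : LimitEdgeObj V → Prop
  | LimitEdgeObj.ee Ω₁ Ω₂ => IsEnd D Ω₁ ∧ IsEnd D Ω₂ ∧ Ω₁ ≠ Ω₂ ∧
      ∀ R ∈ Ω₁, ∀ R' ∈ Ω₂, LimitEdgeEE D R R'
  | LimitEdgeObj.ve v Ω => IsEnd D Ω ∧ ∀ R ∈ Ω, LimitEdgeVE D v R
  | LimitEdgeObj.ev Ω v => IsEnd D Ω ∧ ∀ R ∈ Ω, LimitEdgeEV D R v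

/-- `f` agrees with the map `f_λ` for the end–end limit edge `Ω₁Ω₂`. -/
def AgreesEE (D : V → V → Prop) (Ω₁ Ω₂ : Set (ℕ → V))
    (f : Finset V → Set V ⊕ Set (V × V)) : Prop :=
  ∀ (X : Finset V), ∀ R ∈ Ω₁, ∀ R' ∈ Ω₂, ∀ C C',
    IsSCCIn D ((↑X : Set V)ᶜ) C → HasTailIn R C →
    IsSCCIn D ((↑X : Set V)ᶜ) C' → HasTailIn R' C' →
    (C = C' → f X = Sum.inl C) ∧ (C ≠ C' → f X = Sum.inr (EdgesBetween D C C'))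

/-- `f` agrees with the map `f_λ` for the vertex–end limit edge `vΩ`. -/
def AgreesVE (D : V → V → Prop) (v : V) (Ω : Set (ℕ → V))
    (f : Finset V → Set V ⊕ Set (V × V)) : Prop :=
  ∀ (X : Finset V), ∀ R ∈ Ω, ∀ C, IsSCCIn D ((↑X : Set V)ᶜ) C → HasTailIn R C →
    (v ∈ C → f X = Sum.inl C) ∧
    (v ∈ (↑X : Set V) → f X = Sum.inr (EdgesBetween D {v} C)) ∧
    (∀ C', IsSCCIn D ((↑X : Set V)ᶜ) C' → v ∈ C' → C' ≠ C →
      f X = Sum.inr (EdgesBetween D C' C))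

/-- `f` agrees with the map `f_λ` for the end–vertex limit edge `Ωv`. -/
def AgreesEV (D : V → V → Prop) (Ω : Set (ℕ → V)) (v : V)
    (f : Finset V → Set V ⊕ Set (V × V)) : Prop :=
  ∀ (X : Finset V), ∀ R ∈ Ω, ∀ C, IsSCCIn D ((↑X : Set V)ᶜ) C → HasTailIn R C →
    (v ∈ C → f X = Sum.inl C) ∧
    (v ∈ (↑X : Set V) → f X = Sum.inr (EdgesBetween D C {v})) ∧
    (∀ C', IsSCCIn D ((↑X : Set V)ᶜ) C' → v ∈ C' → C' ≠ C →
      f X = Sum.inr (EdgesBetween D C C'))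

/-- `f` agrees with `f_λ` for the limit edge `l`. -/
def Agrees (D : V → V → Prop) : LimitEdgeObj V → (Finset V → Set V ⊕ Set (V × V)) → Prop
  | LimitEdgeObj.ee Ω₁ Ω₂, f => AgreesEE D Ω₁ Ω₂ f
  | LimitEdgeObj.ve v Ω, f => AgreesVE D v Ω f
  | LimitEdgeObj.ev Ω v, f => AgreesEV D Ω v f

/-!
No walk avoiding the separator `A ∩ B` can get from `B ∖ A` to `A ∖ B`, so every strong
component of `D − (A ∩ B)` lies entirely on one side of `(A, B)`. By monotonicity, `f` at the
union of all separators involved lies inside `f` at each of them; a vertex there sits on the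
correct side of both given separations, hence of their supremum (infimum), and being in the
strong component `f` of the new separator it puts that whole component on the same side.
-/

variable {D : V → V → Prop} {S C A B A₁ B₁ A₂ B₂ : Set V}

lemma ReachIn.trans {a b c : V} (hab : ReachIn D S a b) (hbc : ReachIn D S b c) :
    ReachIn D S a c :=
  ⟨hab.1, hbc.2.1, hab.2.2.trans hbc.2.2⟩

namespace IsSCCIn

lemma nonempty (hC : IsSCCIn D S C) : C.Nonempty := by
  obtain ⟨a, ha, rfl⟩ := hC
  exact ⟨a, ⟨ha, ha, .refl⟩, ⟨ha, ha, .refl⟩⟩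

lemma reachIn {a b : V} (hC : IsSCCIn D S C) (ha : a ∈ C) (hb : b ∈ C) : ReachIn D S a b := by
  obtain ⟨c, -, rfl⟩ := hC
  exact ha.2.trans hb.1

end IsSCCIn

namespace IsSep

lemma mem_union (hs : IsSep D A B) (x : V) : x ∈ A ∪ B := hs.1 ▸ Set.mem_univ x

lemma sup (hs₁ : IsSep D A₁ B₁) (hs₂ : IsSep D A₂ B₂) : IsSep D (A₁ ∪ A₂) (B₁ ∩ B₂) := by
  refine ⟨Set.eq_univ_of_forall fun x => ?_, ?_⟩
  · have := hs₁.mem_union x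
    have := hs₂.mem_union x
    grind
  · rintro a ⟨⟨haB₁, haB₂⟩, haA⟩ b ⟨hbA, hbB⟩
    by_cases hb₁ : b ∈ B₁
    · have hb₂ := hs₂.mem_union b
      exact hs₂.2 a ⟨haB₂, fun h => haA (.inr h)⟩ b (by grind)
    · have hb₁' := hs₁.mem_union b
      exact hs₁.2 a ⟨haB₁, fun h => haA (.inl h)⟩ b (by grind)

lemma inf (hs₁ : IsSep D A₁ B₁) (hs₂ : IsSep D A₂ B₂) : IsSep D (A₁ ∩ A₂) (B₁ ∪ B₂) := by
  refine ⟨Set.eq_univ_of_forall fun x => ?_, ?_⟩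
  · have := hs₁.mem_union x
    have := hs₂.mem_union x
    grind
  · rintro a ⟨haB, haA⟩ b ⟨⟨hbA₁, hbA₂⟩, hbB⟩
    by_cases ha₁ : a ∈ A₁
    · have ha₂ := hs₂.mem_union a
      exact hs₂.2 a (by grind) b ⟨hbA₂, fun h => hbB (.inr h)⟩
    · have ha₁' := hs₁.mem_union a
      exact hs₁.2 a (by grind) b ⟨hbA₁, fun h => hbB (.inl h)⟩

lemma mem_diff_of_reflTransGen (hs : IsSep D A B) {a b : V}
    (h : Relation.ReflTransGen (fun x y => y ∈ (A ∩ B)ᶜ ∧ D x y) a b) (ha : a ∈ B \ A) :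
    b ∈ B \ A := by
  induction h with
  | refl => exact ha
  | @tail c d _ hcd ih =>
    rcases hs.mem_union d with hd | hd
    · exact absurd hcd.2 (hs.2 c ih d ⟨hd, fun hd' => hcd.1 ⟨hd, hd'⟩⟩)
    · exact ⟨hd, fun hd' => hcd.1 ⟨hd', hd⟩⟩

lemma subset_right_of_isSCCIn (hs : IsSep D A B) (hC : IsSCCIn D (A ∩ B)ᶜ C) {x : V}
    (hxC : x ∈ C) (hx : x ∈ B \ A) : C ⊆ B \ A :=
  fun _ hy => hs.mem_diff_of_reflTransGen (hC.reachIn hxC hy).2.2 hx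

lemma subset_left_of_isSCCIn (hs : IsSep D A B) (hC : IsSCCIn D (A ∩ B)ᶜ C) {x : V}
    (hxC : x ∈ C) (hx : x ∈ A \ B) : C ⊆ A \ B := by
  intro y hy
  have hyx := hC.reachIn hy hxC
  have hyS : y ∉ A ∩ B := hyx.1
  rcases hs.mem_union y with hyA | hyB
  · exact ⟨hyA, fun hyB => hyS ⟨hyA, hyB⟩⟩
  · exact absurd (hs.mem_diff_of_reflTransGen hyx.2.2 ⟨hyB, fun hyA => hyS ⟨hyA, hyB⟩⟩).1 hx.2

end IsSep

namespace IsVertexDirection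

variable {f : Finset V → Set V}

lemma exists_mem_forall [DecidableEq V] (hf : IsVertexDirection D f) (s : Finset (Finset V)) :
    ∃ p, ∀ X ∈ s, p ∈ f X := by
  obtain ⟨p, hp⟩ := (hf.1 (s.sup id)).nonempty
  exact ⟨p, fun X hX => hf.2 X _ (Finset.le_sup (f := id) hX) hp⟩

lemma isSCCIn_sep (hf : IsVertexDirection D f) (h : (A ∩ B).Finite) :
    IsSCCIn D (A ∩ B)ᶜ (f h.toFinset) := by
  simpa using hf.1 h.toFinset

lemma pointsTowards_of_mem (hf : IsVertexDirection D f) (hs : IsSep D A B)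
    (h : (A ∩ B).Finite) {p : V} (hp : p ∈ f h.toFinset) (hpB : p ∈ B \ A) :
    PointsTowards D f A B h :=
  hs.subset_right_of_isSCCIn (hf.isSCCIn_sep h) hp hpB

lemma pointsAway_of_mem (hf : IsVertexDirection D f) (hs : IsSep D A B)
    (h : (A ∩ B).Finite) {p : V} (hp : p ∈ f h.toFinset) (hpA : p ∈ A \ B) :
    PointsAway D f A B h :=
  hs.subset_left_of_isSCCIn (hf.isSCCIn_sep h) hp hpA

end IsVertexDirection

/-- Suprema of separations pointing towards a vertex-direction point towards it; infima of
separations pointing away point away. -/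
theorem sep_sup_inf_points (D : V → V → Prop) (f : Finset V → Set V)
    (hf : IsVertexDirection D f) (A₁ B₁ A₂ B₂ : Set V)
    (hs₁ : IsSep D A₁ B₁) (hs₂ : IsSep D A₂ B₂)
    (h₁ : (A₁ ∩ B₁).Finite) (h₂ : (A₂ ∩ B₂).Finite)
    (hsup : ((A₁ ∪ A₂) ∩ (B₁ ∩ B₂)).Finite) (hinf : ((A₁ ∩ A₂) ∩ (B₁ ∪ B₂)).Finite) :
    (PointsTowards D f A₁ B₁ h₁ → PointsTowards D f A₂ B₂ h₂ →
      PointsTowards D f (A₁ ∪ A₂) (B₁ ∩ B₂) hsup) ∧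
    (PointsAway D f A₁ B₁ h₁ → PointsAway D f A₂ B₂ h₂ →
      PointsAway D f (A₁ ∩ A₂) (B₁ ∪ B₂) hinf) := by
  classical
  obtain ⟨p, hp⟩ :=
    hf.exists_mem_forall {h₁.toFinset, h₂.toFinset, hsup.toFinset, hinf.toFinset}
  simp only [Finset.mem_insert, Finset.mem_singleton, forall_eq_or_imp, forall_eq] at hp
  obtain ⟨hp₁, hp₂, hpsup, hpinf⟩ := hp
  refine ⟨fun ht₁ ht₂ => ?_, fun ha₁ ha₂ => ?_⟩
  · obtain ⟨⟨hpB₁, hpA₁⟩, hpB₂, hpA₂⟩ := And.intro (ht₁ hp₁) (ht₂ hp₂)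
    exact hf.pointsTowards_of_mem (hs₁.sup hs₂) hsup hpsup
      ⟨⟨hpB₁, hpB₂⟩, fun h => h.elim hpA₁ hpA₂⟩
  · obtain ⟨⟨hpA₁, hpB₁⟩, hpA₂, hpB₂⟩ := And.intro (ha₁ hp₁) (ha₂ hp₂)
    exact hf.pointsAway_of_mem (hs₁.inf hs₂) hinf hpinf
      ⟨⟨hpA₁, hpA₂⟩, fun h => h.elim hpB₁ hpB₂⟩
end

section
/- Let D be a strongly connected digraph and f a vertex-direction of D. Then exactly one of the following holds: (i) some vertex dominates f; (ii) there is a strictly descending sequence ((Aᵢ,Bᵢ))_{i∈ℕ} of finite order separations of D with pairwise disjoint separators, all pointing away from f. -/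
variable {V : Type*}

/-! If no vertex dominates `f`, every vertex `x` avoids the side `A` of some finite order
separation `(A, B)` pointing away from `f`, and such separations are closed under
`(A₁, B₁) ⊓ (A₂, B₂) = (A₁ ∩ A₂, B₁ ∪ B₂)`. Meeting the current separation with one such
separation for each vertex of its separator and for one vertex of `f (A ∩ B)` gives a strictly
smaller separation pointing away from `f` whose separator avoids the old `B`; iterating yields
the descending sequence. Conversely, a dominating vertex `v` lies in every `Aᵢ`, hence in no `Bᵢ`,
so a walk from `B₁` to `v` would meet all of the infinitely many disjoint separators. -/

open Function Relation

theorem Relation.ReflTransGen.exists_finset_restrict {α : Type*} {r : α → α → Prop} {x y : α}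
    (h : ReflTransGen r x y) :
    ∃ W : Finset α, x ∈ W ∧ ReflTransGen (fun a b => b ∈ W ∧ r a b) x y := by
  classical
  induction h with
  | refl => exact ⟨{x}, Finset.mem_singleton_self x, .refl⟩
  | @tail _ c _ hbc ih =>
    obtain ⟨W, hxW, hW⟩ := ih
    refine ⟨insert c W, Finset.mem_insert_of_mem hxW, ?_⟩
    exact (ReflTransGen.mono (fun a b hab => ⟨Finset.mem_insert_of_mem hab.1, hab.2⟩) _ _ hW).tail
      ⟨Finset.mem_insert_self c W, hbc⟩

theorem pairwise_disjoint_of_disjoint_succ {α : Type*} {s B : ℕ → Set α} (hB : Monotone B)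
    (hsB : ∀ i, s i ⊆ B i) (hdisj : ∀ i, Disjoint (s (i + 1)) (B i)) :
    Pairwise (Disjoint on s) := by
  refine (pairwise_disjoint_on s).2 fun m n hmn => ?_
  obtain ⟨k, rfl⟩ := Nat.exists_eq_add_of_lt hmn
  exact (hdisj (m + k)).symm.mono_left ((hsB m).trans (hB (Nat.le_add_right m k)))

section Separations

variable {D : V → V → Prop} {f : Finset V → Set V}

theorem IsSCCIn.subset {S C : Set V} (h : IsSCCIn D S C) : C ⊆ S := by
  obtain ⟨a, _, rfl⟩ := h
  exact fun b hb => hb.1.2.1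

theorem IsSCCIn.nonempty_s10 {S C : Set V} (h : IsSCCIn D S C) : C.Nonempty := by
  obtain ⟨a, ha, rfl⟩ := h
  exact ⟨a, ⟨ha, ha, .refl⟩, ⟨ha, ha, .refl⟩⟩

theorem IsSCCIn.reachIn_s10 {S C : Set V} (h : IsSCCIn D S C) {a b : V} (ha : a ∈ C) (hb : b ∈ C) :
    ReachIn D S a b := by
  obtain ⟨c, _, rfl⟩ := h
  exact ⟨ha.2.1, hb.1.2.1, ha.2.2.2.trans hb.1.2.2⟩

theorem IsSep.mem_or_mem {A B : Set V} (h : IsSep D A B) (x : V) : x ∈ A ∨ x ∈ B :=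
  Set.eq_univ_iff_forall.1 h.1 x

theorem IsSep.exists_mem_inter_of_reflTransGen {A B S : Set V} (hs : IsSep D A B) {x y : V}
    (hxy : ReflTransGen (fun a b => b ∈ S ∧ D a b) x y) (hxS : x ∈ S) (hxB : x ∈ B)
    (hy : y ∈ A \ B) : ∃ p ∈ S, p ∈ A ∩ B := by
  by_contra! hS
  have hBA : ∀ z, ReflTransGen (fun a b => b ∈ S ∧ D a b) x z → z ∈ B \ A := by
    intro z hz
    induction hz with
    | refl => exact ⟨hxB, fun hxA => hS x hxS ⟨hxA, hxB⟩⟩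
    | @tail b c _ hbc ih =>
      have hcB : c ∈ B := by
        by_contra hcB
        exact hs.2 b ih c ⟨(hs.mem_or_mem c).resolve_right hcB, hcB⟩ hbc.2
      exact ⟨hcB, fun hcA => hS c hbc.1 ⟨hcA, hcB⟩⟩
  exact (hBA y hxy).2 hy.1

theorem IsSep.inter_union {A₁ B₁ A₂ B₂ : Set V} (h₁ : IsSep D A₁ B₁) (h₂ : IsSep D A₂ B₂) :
    IsSep D (A₁ ∩ A₂) (B₁ ∪ B₂) := by
  refine ⟨Set.eq_univ_of_forall fun y => ?_, ?_⟩
  · by_cases hy : y ∈ B₁ ∪ B₂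
    · exact Or.inr hy
    · rw [Set.mem_union, not_or] at hy
      exact Or.inl ⟨(h₁.mem_or_mem y).resolve_right hy.1, (h₂.mem_or_mem y).resolve_right hy.2⟩
  · rintro a ⟨-, haA⟩ b ⟨⟨hb₁, hb₂⟩, hbB⟩
    rw [Set.mem_union, not_or] at hbB
    rcases not_and_or.mp haA with ha₁ | ha₂
    · exact h₁.2 a ⟨(h₁.mem_or_mem a).resolve_left ha₁, ha₁⟩ b ⟨hb₁, hbB.1⟩
    · exact h₂.2 a ⟨(h₂.mem_or_mem a).resolve_left ha₂, ha₂⟩ b ⟨hb₂, hbB.2⟩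

theorem inter_inter_union_subset (A₁ B₁ A₂ B₂ : Set V) :
    (A₁ ∩ A₂) ∩ (B₁ ∪ B₂) ⊆ (A₁ ∩ B₁) ∪ (A₂ ∩ B₂) := by
  rintro y ⟨⟨hy₁, hy₂⟩, hyB | hyB⟩
  exacts [Or.inl ⟨hy₁, hyB⟩, Or.inr ⟨hy₂, hyB⟩]

/-- It suffices to check pointing away at any finite superset `Z` of the separator, since the
strong component `f (A ∩ B)` contains `f Z` and cannot cross the separator. -/
theorem IsSep.pointsAway_of_subset (hf : IsVertexDirection D f) {A B : Set V}
    (hs : IsSep D A B) (h : (A ∩ B).Finite) {Z : Finset V} (hZ : A ∩ B ⊆ Z)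
    (hfZ : f Z ⊆ A \ B) : PointsAway D f A B h := by
  obtain ⟨c, hc⟩ := (hf.1 Z).nonempty_s10
  have hcf : c ∈ f h.toFinset := hf.2 _ _ (fun y hy => hZ ((h.mem_toFinset).1 hy)) hc
  intro y hy
  have hyS := (hf.1 _).subset hy
  have hyc := (hf.1 _).reachIn_s10 hy hcf
  rw [h.coe_toFinset] at hyS hyc
  rcases hs.mem_or_mem y with hyA | hyB
  · exact ⟨hyA, fun hyB => hyS ⟨hyA, hyB⟩⟩
  · obtain ⟨p, hpS, hp⟩ := hs.exists_mem_inter_of_reflTransGen hyc.2.2 hyc.1 hyB (hfZ hc)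
    exact absurd hp hpS

variable (D f) in
structure AwaySeparation where
  A : Set V
  B : Set V
  finite : (A ∩ B).Finite
  isSep : IsSep D A B
  pointsAway : PointsAway D f A B finite

namespace AwaySeparation

def top : AwaySeparation D f where
  A := Set.univ
  B := ∅
  finite := by simp
  isSep := ⟨by simp, fun _ ha => absurd ha.1 (Set.notMem_empty _)⟩
  pointsAway := fun y _ => ⟨Set.mem_univ y, Set.notMem_empty y⟩

def inf (hf : IsVertexDirection D f) (g₁ g₂ : AwaySeparation D f) : AwaySeparation D f where
  A := g₁.A ∩ g₂.A
  B := g₁.B ∪ g₂.B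
  finite := (g₁.finite.union g₂.finite).subset (inter_inter_union_subset _ _ _ _)
  isSep := g₁.isSep.inter_union g₂.isSep
  pointsAway := by
    let Z := (g₁.finite.union g₂.finite).toFinset
    have hZ₁ : f Z ⊆ g₁.A \ g₁.B :=
      (hf.2 _ Z fun y hy => by simp [Z, (g₁.finite.mem_toFinset).1 hy]).trans g₁.pointsAway
    have hZ₂ : f Z ⊆ g₂.A \ g₂.B :=
      (hf.2 _ Z fun y hy => by simp [Z, (g₂.finite.mem_toFinset).1 hy]).trans g₂.pointsAway
    refine (g₁.isSep.inter_union g₂.isSep).pointsAway_of_subset hf _ (Z := Z)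
      (fun y hy => (Set.Finite.mem_toFinset _).2 (inter_inter_union_subset _ _ _ _ hy))
      fun y hy => ?_
    exact ⟨⟨(hZ₁ hy).1, (hZ₂ hy).1⟩, by rintro (h | h); exacts [(hZ₁ hy).2 h, (hZ₂ hy).2 h]⟩

theorem exists_notMem_A {v : V} (hv : ¬ DomDir D v f) : ∃ g : AwaySeparation D f, v ∉ g.A := by
  simp only [DomDir, not_forall] at hv
  obtain ⟨A, B, hsep, hfin, haway, hvA⟩ := hv
  exact ⟨⟨A, B, hfin, hsep, haway⟩, hvA⟩

theorem exists_le_forall_notMem (hf : IsVertexDirection D f) (hnd : ∀ v, ¬ DomDir D v f)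
    (g : AwaySeparation D f) (T : Finset V) :
    ∃ g' : AwaySeparation D f, g'.A ⊆ g.A ∧ g.B ⊆ g'.B ∧ ∀ x ∈ T, x ∉ g'.A := by
  classical
  induction T using Finset.induction_on with
  | empty => exact ⟨g, subset_rfl, subset_rfl, by simp⟩
  | insert x T _ ih =>
    obtain ⟨g', hA, hB, hT⟩ := ih
    obtain ⟨gx, hx⟩ := exists_notMem_A (hnd x)
    refine ⟨g'.inf hf gx, Set.inter_subset_left.trans hA, hB.trans Set.subset_union_left, ?_⟩
    simp only [Finset.mem_insert, forall_eq_or_imp]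
    exact ⟨fun h => hx h.2, fun y hy h => hT y hy h.1⟩

theorem exists_next (hf : IsVertexDirection D f) (hnd : ∀ v, ¬ DomDir D v f)
    (g : AwaySeparation D f) :
    ∃ g' : AwaySeparation D f, g'.A ⊆ g.A ∧ g.B ⊆ g'.B ∧ g'.A ≠ g.A ∧
      Disjoint (g'.A ∩ g'.B) g.B := by
  classical
  obtain ⟨u, hu⟩ := (hf.1 g.finite.toFinset).nonempty_s10
  obtain ⟨g', hA, hB, hT⟩ := g.exists_le_forall_notMem hf hnd (insert u g.finite.toFinset)
  refine ⟨g', hA, hB, fun h => hT u (Finset.mem_insert_self _ _) (h ▸ (g.pointsAway hu).1), ?_⟩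
  refine Set.disjoint_left.2 fun y hy hyB => hT y ?_ hy.1
  exact Finset.mem_insert_of_mem ((g.finite.mem_toFinset).2 ⟨hA hy.1, hyB⟩)

end AwaySeparation

theorem exists_descending_separations (hf : IsVertexDirection D f)
    (hnd : ∀ v, ¬ DomDir D v f) :
    ∃ (A B : ℕ → Set V) (h : ∀ i, (A i ∩ B i).Finite),
      (∀ i, IsSep D (A i) (B i)) ∧
      (∀ i, PointsAway D f (A i) (B i) (h i)) ∧
      (∀ i, A (i + 1) ⊆ A i ∧ B i ⊆ B (i + 1) ∧ (A (i + 1) ≠ A i ∨ B (i + 1) ≠ B i)) ∧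
      (∀ i j, i ≠ j → Disjoint (A i ∩ B i) (A j ∩ B j)) := by
  choose next hA hB hne hdisj using AwaySeparation.exists_next hf hnd
  let g : ℕ → AwaySeparation D f := fun n => next^[n] .top
  have hg : ∀ n, g (n + 1) = next (g n) := fun n => Function.iterate_succ_apply' next n _
  have hBmono : Monotone fun n => (g n).B := monotone_nat_of_le_succ fun n => hg n ▸ hB (g n)
  refine ⟨fun n => (g n).A, fun n => (g n).B, fun n => (g n).finite, fun n => (g n).isSep,
    fun n => (g n).pointsAway, fun n => ?_, fun i j hij => ?_⟩
  · dsimp only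
    rw [hg]
    exact ⟨hA _, hB _, Or.inl (hne _)⟩
  · exact pairwise_disjoint_of_disjoint_succ (s := fun n => (g n).A ∩ (g n).B) hBmono
      (fun _ => Set.inter_subset_right)
      (fun n => hg n ▸ hdisj (g n)) hij

theorem not_domDir_of_descending_separations (hsc : ∀ a b : V, ReachIn D Set.univ a b)
    {A B : ℕ → Set V} (h : ∀ i, (A i ∩ B i).Finite)
    (hsep : ∀ i, IsSep D (A i) (B i))
    (haway : ∀ i, PointsAway D f (A i) (B i) (h i))
    (hdesc : ∀ i, A (i + 1) ⊆ A i ∧ B i ⊆ B (i + 1) ∧ (A (i + 1) ≠ A i ∨ B (i + 1) ≠ B i))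
    (hdisj : ∀ i j, i ≠ j → Disjoint (A i ∩ B i) (A j ∩ B j)) (v : V) : ¬ DomDir D v f := by
  intro hv
  have hvA : ∀ i, v ∈ A i := fun i => hv _ _ (hsep i) (h i) (haway i)
  have hBmono : Monotone B := monotone_nat_of_le_succ fun i => (hdesc i).2.1
  have hvB : ∀ i, v ∉ B i := fun i hvB => Set.disjoint_left.1 (hdisj i (i + 1) (by omega))
    ⟨hvA i, hvB⟩ ⟨hvA _, (hdesc i).2.1 hvB⟩
  obtain ⟨x, hx⟩ : (B 1).Nonempty := by
    by_contra! hB₁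
    have hA₁ : A 1 = Set.univ := Set.eq_univ_of_forall fun y =>
      ((hsep 1).mem_or_mem y).resolve_right (hB₁ ▸ Set.notMem_empty y)
    rcases (hdesc 0).2.2 with hA | hB
    · exact hA (hA₁.trans (Set.univ_subset_iff.1 (hA₁ ▸ (hdesc 0).1)).symm)
    · exact hB (hB₁.trans (Set.subset_eq_empty (hdesc 0).2.1 hB₁).symm)
  obtain ⟨W, hxW, hW⟩ := (hsc x v).2.2.exists_finset_restrict
  have hW' : ReflTransGen (fun a b => b ∈ W ∧ D a b) x v :=
    ReflTransGen.mono (fun _ _ hab => ⟨hab.1, hab.2.2⟩) _ _ hW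
  have hcross : ∀ n, ∃ p ∈ W, p ∈ A (n + 1) ∩ B (n + 1) := fun n =>
    (hsep (n + 1)).exists_mem_inter_of_reflTransGen hW' hxW (hBmono (by omega) hx)
      ⟨hvA _, hvB _⟩
  choose p hpW hp using hcross
  have hinj : Function.Injective p := fun n m hnm => by
    by_contra hne
    exact Set.disjoint_left.1 (hdisj _ _ (by omega)) (hp n) (hnm ▸ hp m)
  exact Set.infinite_of_injective_forall_mem hinj hpW W.finite_toSet

end Separations

/-- In a strongly connected digraph, a vertex-direction is dominated or (exclusively) there is
a strictly descending sequence of finite order separations with pairwise disjoint separators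
all pointing away from it. -/
theorem dominated_xor_descending_separations (D : V → V → Prop)
    (hsc : ∀ a b : V, ReachIn D Set.univ a b)
    (f : Finset V → Set V) (hf : IsVertexDirection D f) :
    Xor' (∃ v, DomDir D v f)
      (∃ (A B : ℕ → Set V) (h : ∀ i, (A i ∩ B i).Finite),
        (∀ i, IsSep D (A i) (B i)) ∧
        (∀ i, PointsAway D f (A i) (B i) (h i)) ∧
        (∀ i, A (i + 1) ⊆ A i ∧ B i ⊆ B (i + 1) ∧ (A (i + 1) ≠ A i ∨ B (i + 1) ≠ B i)) ∧
        (∀ i j, i ≠ j → Disjoint (A i ∩ B i) (A j ∩ B j))) := by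
  refine xor_iff_iff_not.2 ⟨?_, ?_⟩
  · rintro ⟨v, hv⟩ ⟨A, B, h, hsep, haway, hdesc, hdisj⟩
    exact not_domDir_of_descending_separations hsc h hsep haway hdesc hdisj v hv
  · exact fun hseq => by_contra fun hdom =>
      hseq (exists_descending_separations hf (not_exists.1 hdom))
end
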